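/- arXiv:1705.08632 — 4 statements merged into one kernel-verified Lean document; each statement's English description precedes it below -/
import Mathlib

section
/- The big-step evaluation relation for rewriting strategies is deterministic: if under a context Γ the application of a strategy S to a ground term t evaluates to a result u, and it also evaluates to a result u', then u = u'. -/
/-- Ground (variable-free) first-order terms over a signature whose symbols
are the elements of `F`. -/
inductive GTerm (F : Type) : Type
  | node : F → List (GTerm F) → GTerm F

/-- First-order terms over symbols `F` and term variables `V`. -/
inductive Tm (F : Type) (V : Type) : Type
  | var : V → Tm F V
  | node : F → List (Tm F V) → Tm F V

/-- `VarIn v t` : the variable `v` occurs in the term `t`. -/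
inductive VarIn {F V : Type} (v : V) : Tm F V → Prop
  | var : VarIn v (.var v)
  | node {f : F} {ts : List (Tm F V)} {t : Tm F V} :
      t ∈ ts → VarIn v t → VarIn v (.node f ts)

/-- Rewriting strategies: identity, failure, a rewrite rule `l → r`
(with `vars r ⊆ vars l`), sequence, left-choice, `one`, `all`,
μ-recursion and strategy variables (from `X`). -/
inductive Strat (F V X : Type) : Type
  | id : Strat F V X
  | fail : Strat F V X
  | rule (l r : Tm F V) (wf : ∀ v, VarIn v r → VarIn v l) : Strat F V X
  | seq (s₁ s₂ : Strat F V X) : Strat F V X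
  | choice (s₁ s₂ : Strat F V X) : Strat F V X
  | one (s : Strat F V X) : Strat F V X
  | all (s : Strat F V X) : Strat F V X
  | mu (x : X) (s : Strat F V X) : Strat F V X
  | var (x : X) : Strat F V X

/-- Application of a (ground) substitution to a term. -/
def substG {F V : Type} (σ : V → GTerm F) : Tm F V → GTerm F
  | .var v => σ v
  | .node f ts => .node f (ts.attach.map (fun t => substG σ t.1))
termination_by t => sizeOf t
decreasing_by
  have := List.sizeOf_lt_of_mem t.2
  simp only [Tm.node.sizeOf_spec]
  omega

/-- Contexts map strategy variables to strategies. -/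
abbrev Ctx (F V X : Type) := X → Option (Strat F V X)

/-- Big-step evaluation judgment `Γ ⊢ [S](t) ⇒ u`; the result `u` is
`some t'` for a ground term `t'`, or `none`, representing `Fail`. -/
inductive Eval {F V X : Type} [DecidableEq X] :
    Ctx F V X → Strat F V X → GTerm F → Option (GTerm F) → Prop
  | id {Γ t} : Eval Γ .id t (some t)
  | fail {Γ t} : Eval Γ .fail t none
  | ruleOk {Γ l r wf} (σ : V → GTerm F) :
      Eval Γ (.rule l r wf) (substG σ l) (some (substG σ r))
  | ruleFail {Γ l r wf t} : (∀ σ : V → GTerm F, substG σ l ≠ t) →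
      Eval Γ (.rule l r wf) t none
  | seqOk {Γ s₁ s₂ t t' u} : Eval Γ s₁ t (some t') → Eval Γ s₂ t' u →
      Eval Γ (.seq s₁ s₂) t u
  | seqFail {Γ s₁ s₂ t} : Eval Γ s₁ t none → Eval Γ (.seq s₁ s₂) t none
  | choiceOk {Γ s₁ s₂ t t'} : Eval Γ s₁ t (some t') →
      Eval Γ (.choice s₁ s₂) t (some t')
  | choiceFail {Γ s₁ s₂ t u} : Eval Γ s₁ t none → Eval Γ s₂ t u →
      Eval Γ (.choice s₁ s₂) t u
  | mu {Γ x s t u} : Eval (Function.update Γ x (some s)) s t u →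
      Eval Γ (.mu x s) t u
  | muvar {Γ x s t u} : Γ x = some s → Eval Γ s t u → Eval Γ (.var x) t u
  | oneOk {Γ s f pre t post t'} :
      (∀ p ∈ pre, Eval Γ s p none) → Eval Γ s t (some t') →
      Eval Γ (.one s) (.node f (pre ++ t :: post))
        (some (.node f (pre ++ t' :: post)))
  | oneFail {Γ s f ts} : (∀ t ∈ ts, Eval Γ s t none) →
      Eval Γ (.one s) (.node f ts) none
  | allOk {Γ s f ts ts'} : ts.length = ts'.length →
      (∀ p ∈ ts.zip ts', Eval Γ s p.1 (some p.2)) →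
      Eval Γ (.all s) (.node f ts) (some (.node f ts'))
  | allFail {Γ s f ts t} : t ∈ ts → Eval Γ s t none →
      Eval Γ (.all s) (.node f ts) none

/-- A strategy `S` is terminating under the context `Γ` if applying it to any
ground term yields some result (a term or `Fail`). -/
def Terminating {F V X : Type} [DecidableEq X] (Γ : Ctx F V X) (S : Strat F V X) : Prop :=
  ∀ t : GTerm F, ∃ u : Option (GTerm F), Eval Γ S t u

/-!
Induction on one derivation, inverting the other. The rule case holds because a match of `l`
determines the substitution on the variables of `l`, which contain those of `r`. In the `one`
case both derivations rewrite the first argument on which `S` does not fail, so they rewrite the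
same argument.
-/

theorem List.append_cons_eq_append_cons {α : Type*} {a b c d : List α} {x y : α}
    (h : a ++ x :: b = c ++ y :: d) : (a = c ∧ x = y ∧ b = d) ∨ x ∈ c ∨ y ∈ a := by
  rcases List.append_eq_append_iff.mp h with ⟨_ | ⟨z, c'⟩, rfl, h'⟩ | ⟨_ | ⟨z, a'⟩, rfl, h'⟩
  all_goals simp_all

theorem List.forall₂_of_length_eq_of_mem_zip {α β : Type*} {R : α → β → Prop} {as : List α}
    {bs : List β} (hlen : as.length = bs.length) (h : ∀ p ∈ as.zip bs, R p.1 p.2) :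
    Forall₂ R as bs :=
  forall₂_iff_zip.mpr ⟨hlen, fun hab => h _ hab⟩

theorem List.Forall₂.exists_of_mem_left {α β : Type*} {R : α → β → Prop} {as : List α}
    {bs : List β} {a : α} (h : Forall₂ R as bs) (ha : a ∈ as) : ∃ b, R a b := by
  induction h with
  | nil => simp at ha
  | cons hab _ ih =>
    rcases List.mem_cons.mp ha with rfl | ha
    · exact ⟨_, hab⟩
    · exact ih ha

theorem List.Forall₂.eq_of_forall₂ {α β : Type*} {R S : α → β → Prop} {as : List α}
    {bs cs : List β} (hRS : ∀ a b c, R a b → S a c → b = c)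
    (hR : Forall₂ R as bs) (hS : Forall₂ S as cs) : bs = cs := by
  induction hR generalizing cs with
  | nil => exact (forall₂_nil_left_iff.mp hS).symm
  | cons hab _ ih =>
    obtain ⟨c, cs, hac, hcs, rfl⟩ := forall₂_cons_left_iff.mp hS
    rw [hRS _ _ _ hab hac, ih hcs]

section Subst

variable {F V : Type}

theorem substG_congr {σ σ' : V → GTerm F} :
    ∀ t : Tm F V, (∀ v, VarIn v t → σ v = σ' v) → substG σ t = substG σ' t
  | .var v, h => by simpa [substG] using h v .var
  | .node f ts, h => by
    simp only [substG]
    congr 1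
    refine List.map_congr_left fun x _ => ?_
    exact substG_congr x.1 fun v hv => h v (.node x.2 hv)
termination_by t => sizeOf t
decreasing_by
  have := List.sizeOf_lt_of_mem x.2
  simp only [Tm.node.sizeOf_spec]
  omega

theorem VarIn.eq_of_substG_eq {σ σ' : V → GTerm F} {v : V} {t : Tm F V} (hv : VarIn v t)
    (h : substG σ t = substG σ' t) : σ v = σ' v := by
  induction hv with
  | var => simpa [substG] using h
  | node hmem _ ih =>
    simp only [substG, GTerm.node.injEq] at h
    exact ih (List.map_inj_left.mp h.2 ⟨_, hmem⟩ (List.mem_attach _ _))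

end Subst

section Eval

variable {F V X : Type} [DecidableEq X] {Γ : Ctx F V X} {s : Strat F V X} {f : F}

theorem eval_rule_unique {l r : Tm F V} {wf : ∀ v, VarIn v r → VarIn v l} {t : GTerm F}
    {u u' : Option (GTerm F)} (h : Eval Γ (.rule l r wf) t u)
    (h' : Eval Γ (.rule l r wf) t u') : u = u' := by
  cases h with
  | ruleOk σ =>
    generalize ht : substG σ l = t at h'
    cases h' with
    | ruleOk σ' =>
      rw [substG_congr r fun v hv => (wf v hv).eq_of_substG_eq ht]
    | ruleFail hne => exact absurd ht (hne σ)
  | ruleFail hne =>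
    cases h' with
    | ruleOk σ' => exact absurd rfl (hne σ')
    | ruleFail => rfl

theorem eval_one_eq_some {pre post : List (GTerm F)} {t t' : GTerm F} {u : Option (GTerm F)}
    (hpre : ∀ p ∈ pre, ∀ v, Eval Γ s p v → none = v) (ht : ∀ v, Eval Γ s t v → some t' = v)
    (h : Eval Γ (.one s) (.node f (pre ++ t :: post)) u) :
    some (.node f (pre ++ t' :: post)) = u := by
  generalize hT : GTerm.node f (pre ++ t :: post) = T at h
  cases h with
  | @oneOk _ _ _ pre₂ t₂ post₂ t₂' hpre₂ ht₂ =>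
    obtain ⟨rfl, hargs⟩ := GTerm.node.inj hT
    rcases List.append_cons_eq_append_cons hargs with ⟨rfl, rfl, rfl⟩ | ht_mem | ht₂_mem
    · cases ht _ ht₂; rfl
    · exact absurd (ht _ (hpre₂ _ ht_mem)) nofun
    · exact absurd (hpre _ ht₂_mem _ ht₂) nofun
  | oneFail hall =>
    obtain ⟨rfl, rfl⟩ := GTerm.node.inj hT
    exact absurd (ht _ (hall t (by simp))) nofun

theorem eval_one_eq_none {ts : List (GTerm F)} {u : Option (GTerm F)}
    (hts : ∀ x ∈ ts, ∀ v, Eval Γ s x v → none = v) (h : Eval Γ (.one s) (.node f ts) u) :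
    none = u := by
  cases h with
  | oneOk _ ht => exact absurd (hts _ (by simp) _ ht) nofun
  | oneFail => rfl

theorem eval_all_eq_some {ts ts' : List (GTerm F)} {u : Option (GTerm F)}
    (hts : List.Forall₂ (fun a b => ∀ v, Eval Γ s a v → some b = v) ts ts')
    (h : Eval Γ (.all s) (.node f ts) u) : some (.node f ts') = u := by
  cases h with
  | allOk hlen hall =>
    rw [hts.eq_of_forall₂ (fun _ _ _ hb hc => Option.some.inj (hb _ hc))
      (List.forall₂_of_length_eq_of_mem_zip hlen hall)]
  | allFail hmem hfail =>
    obtain ⟨b, hb⟩ := hts.exists_of_mem_left hmem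
    exact absurd (hb _ hfail) nofun

theorem eval_all_eq_none {ts : List (GTerm F)} {t : GTerm F} {u : Option (GTerm F)}
    (hmem : t ∈ ts) (ht : ∀ v, Eval Γ s t v → none = v) (h : Eval Γ (.all s) (.node f ts) u) :
    none = u := by
  cases h with
  | allOk hlen hall =>
    obtain ⟨b, hb⟩ :=
      (List.forall₂_of_length_eq_of_mem_zip (R := fun a b => Eval Γ s a (some b)) hlen
        hall).exists_of_mem_left hmem
    exact absurd (ht _ hb) nofun
  | allFail => rfl

end Eval

/-- the big-step evaluation relation is deterministic. -/
theorem eval_deterministic {F V X : Type} [DecidableEq X]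
    (Γ : Ctx F V X) (S : Strat F V X) (t : GTerm F)
    (u u' : Option (GTerm F)) (h : Eval Γ S t u) (h' : Eval Γ S t u') :
    u = u' := by
  induction h generalizing u' with
  | id | fail => cases h'; rfl
  | ruleOk σ => exact eval_rule_unique (.ruleOk σ) h'
  | ruleFail hne => exact eval_rule_unique (.ruleFail hne) h'
  | seqOk _ _ ih₁ ih₂ =>
    cases h' with
    | seqOk h₁ h₂ => cases ih₁ _ h₁; exact ih₂ _ h₂
    | seqFail h₁ => exact absurd (ih₁ _ h₁) nofun
  | seqFail _ ih₁ =>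
    cases h' with
    | seqOk h₁ _ => exact absurd (ih₁ _ h₁) nofun
    | seqFail => rfl
  | choiceOk _ ih₁ =>
    cases h' with
    | choiceOk h₁ => exact ih₁ _ h₁
    | choiceFail h₁ _ => exact absurd (ih₁ _ h₁) nofun
  | choiceFail _ _ ih₁ ih₂ =>
    cases h' with
    | choiceOk h₁ => exact absurd (ih₁ _ h₁) nofun
    | choiceFail _ h₂ => exact ih₂ _ h₂
  | mu _ ih => cases h' with | mu h₁ => exact ih _ h₁
  | muvar hΓ _ ih =>
    cases h' with
    | muvar hΓ' h₁ => cases hΓ.symm.trans hΓ'; exact ih _ h₁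
  | oneOk _ _ ihpre iht => exact eval_one_eq_some ihpre iht h'
  | oneFail _ ih => exact eval_one_eq_none ih h'
  | allOk hlen _ ih => exact eval_all_eq_some (List.forall₂_of_length_eq_of_mem_zip hlen ih) h'
  | allFail hmem _ ih => exact eval_all_eq_none hmem ih h'
end

section
/- For any strategy S, any context Γ, and any ground term t, applying Repeat(S) := μX.((S;X) <+ id) to t never evaluates to Fail: if Γ ⊢ [μX.((S;X) <+ id)](t) ⇒ u then u is a ground term. -/
/-- `Repeat(S) = μX.((S;X) <+ id)` never evaluates to `Fail`. -/
theorem repeat_never_fails {F V X : Type} [DecidableEq X]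
    (Γ : Ctx F V X) (S : Strat F V X) (x : X) (t : GTerm F)
    (u : Option (GTerm F))
    (h : Eval Γ (.mu x (.choice (.seq S (.var x)) .id)) t u) :
    ∃ t' : GTerm F, u = some t' := by
  cases h with
  | mu h =>
    cases h with
    | choiceOk h => exact ⟨_, rfl⟩
    | choiceFail h1 h2 => cases h2; exact ⟨_, rfl⟩
end

section
/- The origin of failure is preserved by the encoding: for any strategy S, context Γ with free strategy variables of S in the domain of Γ, and ground term t over the original signature, if φ_S(t) rewrites with respect to T[Γ](S) ∪ T[Γ](Γ) to a term of the form ⊥(t'), then t' = t. -/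
/-- Free strategy variables of a strategy. -/
def fvarS {F V X : Type} : Strat F V X → Set X
  | .var x => {x}
  | .mu x s => fvarS s \ {x}
  | .seq s₁ s₂ => fvarS s₁ ∪ fvarS s₂
  | .choice s₁ s₂ => fvarS s₁ ∪ fvarS s₂
  | .one s => fvarS s
  | .all s => fvarS s
  | .id => ∅
  | .fail => ∅
  | .rule _ _ _ => ∅

/-- The extended signature of the strategy translation: the original symbols
(`base`), the unary failure symbol `⊥` (`bot`), one fresh unary symbol `φ_S`
for every (sub-)strategy `S` and for every strategy variable (`phi`), and the
auxiliary symbols `φ_seq`, `φ_choice`, `ψ_f` (for `all`) and `ψ_f^i`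
(for `one`). -/
inductive ESym (F V X : Type) : Type
  | base (f : F)
  | bot
  | phi (s : Strat F V X)
  | phiSeq (s₁ s₂ : Strat F V X)
  | phiCh (s₁ s₂ : Strat F V X)
  | psiAll (s : Strat F V X) (f : F)
  | psiOne (s : Strat F V X) (f : F) (i : ℕ)

/-- `⊥(t)`. -/
def bt {F V X : Type} (t : GTerm (ESym F V X)) : GTerm (ESym F V X) :=
  .node .bot [t]

/-- `φ_S(t)`. -/
def ph {F V X : Type} (s : Strat F V X) (t : GTerm (ESym F V X)) :
    GTerm (ESym F V X) :=
  .node (.phi s) [t]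

/-- `IsBase ar t` : `t` is (the embedding of) a ground term over the original
signature, i.e. it is built only from `base` symbols, respecting arities.
This is the semantics of the anti-pattern `!⊥(_)`. -/
inductive IsBase {F V X : Type} (ar : F → ℕ) : GTerm (ESym F V X) → Prop
  | node {f : F} {ts : List (GTerm (ESym F V X))} : ts.length = ar f →
      (∀ t ∈ ts, IsBase ar t) → IsBase ar (.node (.base f) ts)

/-- Application of a substitution with values in extended ground terms to a
term of the original signature. -/
def substE {F V X : Type} (σ : V → GTerm (ESym F V X)) :
    Tm F V → GTerm (ESym F V X)
  | .var v => σ v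
  | .node f ts => .node (.base f) (ts.attach.map (fun t => substE σ t.1))
termination_by t => sizeOf t
decreasing_by
  have := List.sizeOf_lt_of_mem t.2
  simp only [Tm.node.sizeOf_spec]
  omega

/-- Ground instances of the rewrite rules of the translation `T[Γ](S)` of a
strategy `S` (Figure 2 of the paper): `SRule ar S a b` holds iff `a → b` is an
instance of a rule generated for `S` or one of its sub-strategies.
Anti-pattern positions (`x@!⊥(_)`, `x@!l`) range over ground terms of the
original signature, plain variables over arbitrary ground terms of the
extended signature. -/
inductive SRule {F V X : Type} (ar : F → ℕ) :
    Strat F V X → GTerm (ESym F V X) → GTerm (ESym F V X) → Prop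
  -- (E1) id
  | idOk {t} : IsBase ar t → SRule ar .id (ph .id t) t
  | idBot {t} : SRule ar .id (ph .id (bt t)) (bt t)
  -- (E2) fail
  | failOk {t} : IsBase ar t → SRule ar .fail (ph .fail t) (bt t)
  | failBot {t} : SRule ar .fail (ph .fail (bt t)) (bt t)
  -- (E3) rewrite rule
  | ruleOk {l r wf} (σ : V → GTerm (ESym F V X)) :
      SRule ar (.rule l r wf) (ph (.rule l r wf) (substE σ l)) (substE σ r)
  | ruleFail {l r wf t} : IsBase ar t →
      (∀ σ : V → GTerm (ESym F V X), substE σ l ≠ t) →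
      SRule ar (.rule l r wf) (ph (.rule l r wf) t) (bt t)
  | ruleBot {l r wf t} :
      SRule ar (.rule l r wf) (ph (.rule l r wf) (bt t)) (bt t)
  -- (E4) sequence
  | seqStart {s₁ s₂ t} : IsBase ar t →
      SRule ar (.seq s₁ s₂) (ph (.seq s₁ s₂) t)
        (.node (.phiSeq s₁ s₂) [ph s₂ (ph s₁ t), t])
  | seqBot {s₁ s₂ t} : SRule ar (.seq s₁ s₂) (ph (.seq s₁ s₂) (bt t)) (bt t)
  | seqOk {s₁ s₂ t u} : IsBase ar t →
      SRule ar (.seq s₁ s₂) (.node (.phiSeq s₁ s₂) [t, u]) t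
  | seqFail {s₁ s₂ t u} :
      SRule ar (.seq s₁ s₂) (.node (.phiSeq s₁ s₂) [bt t, u]) (bt u)
  | seqL {s₁ s₂ a b} : SRule ar s₁ a b → SRule ar (.seq s₁ s₂) a b
  | seqR {s₁ s₂ a b} : SRule ar s₂ a b → SRule ar (.seq s₁ s₂) a b
  -- (E5) choice
  | chStart {s₁ s₂ t} : IsBase ar t →
      SRule ar (.choice s₁ s₂) (ph (.choice s₁ s₂) t)
        (.node (.phiCh s₁ s₂) [ph s₁ t])
  | chBot {s₁ s₂ t} :
      SRule ar (.choice s₁ s₂) (ph (.choice s₁ s₂) (bt t)) (bt t)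
  | chFail {s₁ s₂ t} :
      SRule ar (.choice s₁ s₂) (.node (.phiCh s₁ s₂) [bt t]) (ph s₂ t)
  | chOk {s₁ s₂ t} : IsBase ar t →
      SRule ar (.choice s₁ s₂) (.node (.phiCh s₁ s₂) [t]) t
  | chL {s₁ s₂ a b} : SRule ar s₁ a b → SRule ar (.choice s₁ s₂) a b
  | chR {s₁ s₂ a b} : SRule ar s₂ a b → SRule ar (.choice s₁ s₂) a b
  -- (E6) recursion
  | muStart {x s t} : IsBase ar t →
      SRule ar (.mu x s) (ph (.mu x s) t) (ph s t)
  | muBot {x s t} : SRule ar (.mu x s) (ph (.mu x s) (bt t)) (bt t)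
  | muVarStart {x s t} : IsBase ar t →
      SRule ar (.mu x s) (ph (.var x) t) (ph s t)
  | muVarBot {x s t} : SRule ar (.mu x s) (ph (.var x) (bt t)) (bt t)
  | muSub {x s a b} : SRule ar s a b → SRule ar (.mu x s) a b
  -- (E8) all
  | allBot {s t} : SRule ar (.all s) (ph (.all s) (bt t)) (bt t)
  | allConst {s} {c : F} : ar c = 0 →
      SRule ar (.all s) (ph (.all s) (.node (.base c) []))
        (.node (.base c) [])
  | allStart {s} {f : F} {ts} : 0 < ar f → ts.length = ar f →
      SRule ar (.all s) (ph (.all s) (.node (.base f) ts))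
        (.node (.psiAll s f) (ts.map (ph s) ++ [.node (.base f) ts]))
  | allOk {s} {f : F} {ts u} : 0 < ar f → ts.length = ar f →
      (∀ t ∈ ts, IsBase ar t) →
      SRule ar (.all s) (.node (.psiAll s f) (ts ++ [u])) (.node (.base f) ts)
  | allFail {s} {f : F} {ts u t} : 0 < ar f → ts.length = ar f → bt t ∈ ts →
      SRule ar (.all s) (.node (.psiAll s f) (ts ++ [u])) (bt u)
  | allSub {s a b} : SRule ar s a b → SRule ar (.all s) a b
  -- (E9) one
  | oneBot {s t} : SRule ar (.one s) (ph (.one s) (bt t)) (bt t)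
  | oneConst {s} {c : F} : ar c = 0 →
      SRule ar (.one s) (ph (.one s) (.node (.base c) []))
        (bt (.node (.base c) []))
  | oneStart {s} {f : F} {t ts} : ts.length + 1 = ar f →
      SRule ar (.one s) (ph (.one s) (.node (.base f) (t :: ts)))
        (.node (.psiOne s f 0) (ph s t :: ts))
  | oneOk {s} {f : F} {i : ℕ} {pre post : List (GTerm (ESym F V X))} {t} :
      IsBase ar t → pre.length = i →
      pre.length + 1 + post.length = ar f →
      SRule ar (.one s)
        (.node (.psiOne s f i) (pre.map bt ++ t :: post))
        (.node (.base f) (pre ++ t :: post))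
  | oneNext {s} {f : F} {i : ℕ} {pre post : List (GTerm (ESym F V X))} {t} :
      pre.length = i + 1 →
      pre.length + 1 + post.length = ar f →
      SRule ar (.one s)
        (.node (.psiOne s f i) (pre.map bt ++ t :: post))
        (.node (.psiOne s f (i + 1)) (pre.map bt ++ ph s t :: post))
  | oneLast {s} {f : F} {pre : List (GTerm (ESym F V X))} :
      0 < ar f → pre.length = ar f →
      SRule ar (.one s) (.node (.psiOne s f (ar f - 1)) (pre.map bt))
        (bt (.node (.base f) pre))
  | oneSub {s a b} : SRule ar s a b → SRule ar (.one s) a b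

/-- Ground instances of the rules of the translation `T[Γ](Γ)` of a context:
each binding `X : S` contributes the rules `φ_X(x@!⊥(_)) → φ_S(x)` and
`φ_X(⊥(x)) → ⊥(x)`, together with the rules of the translation of `S`. -/
inductive CRule {F V X : Type} (ar : F → ℕ) (Γ : Ctx F V X) :
    GTerm (ESym F V X) → GTerm (ESym F V X) → Prop
  | varStart {x s t} : Γ x = some s → IsBase ar t →
      CRule ar Γ (ph (.var x) t) (ph s t)
  | varBot {x s t} : Γ x = some s → CRule ar Γ (ph (.var x) (bt t)) (bt t)
  | sub {x s a b} : Γ x = some s → SRule ar s a b → CRule ar Γ a b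

/-- The (ground instances of the) rules of `T[Γ](S) ∪ T[Γ](Γ)`. -/
def ERule {F V X : Type} (ar : F → ℕ) (Γ : Ctx F V X) (S : Strat F V X)
    (a b : GTerm (ESym F V X)) : Prop :=
  SRule ar S a b ∨ CRule ar Γ a b

/-- One-step rewriting with a set of ground rule instances `R`, at any
position. -/
inductive Red {E : Type} (R : GTerm E → GTerm E → Prop) :
    GTerm E → GTerm E → Prop
  | root {a b} : R a b → Red R a b
  | sub {f : E} {pre post : List (GTerm E)} {t t'} : Red R t t' →
      Red R (.node f (pre ++ t :: post)) (.node f (pre ++ t' :: post))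

/-- Many-step rewriting. -/
def Reds {E : Type} (R : GTerm E → GTerm E → Prop) :
    GTerm E → GTerm E → Prop :=
  Relation.ReflTransGen (Red R)

/-- Confluence of a rewrite relation. -/
def Confluent {E : Type} (R : GTerm E → GTerm E → Prop) : Prop :=
  ∀ a b c : GTerm E, Reds R a b → Reds R a c → ∃ d, Reds R b d ∧ Reds R c d

/-! ### Auxiliary development for the failure-origin theorem -/

section FailureOrigin

variable {F V X : Type}

/-- List helper: equal lists ending in a singleton. -/
lemma lastEq {α : Type*} {l₁ l₂ : List α} {a b : α}
    (h : l₁ ++ [a] = l₂ ++ [b]) : l₁ = l₂ ∧ a = b := by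
  have hl : l₁.length = l₂.length := by
    have := congrArg List.length h; simp at this; omega
  obtain ⟨h1, h2⟩ := List.append_inj h hl
  exact ⟨h1, by simpa using h2⟩

lemma split1 {α : Type*} {pre post : List α} {x a : α}
    (h : pre ++ x :: post = [a]) : pre = [] ∧ x = a ∧ post = [] := by
  cases pre with
  | nil => simpa using h
  | cons y ys => (have := congrArg List.length h; simp at this)

lemma split2 {α : Type*} {pre post : List α} {x a b : α}
    (h : pre ++ x :: post = [a, b]) :
    (pre = [] ∧ x = a ∧ post = [b]) ∨ (pre = [a] ∧ x = b ∧ post = []) := by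
  cases pre with
  | nil => left; simpa using h
  | cons y ys =>
    cases ys with
    | nil => right; simp at h; exact ⟨by simp [h.1], h.2.1, h.2.2⟩
    | cons z zs => (have := congrArg List.length h; simp at this)

lemma splitLast {α : Type*} {l : List α} {u : α} {pre post : List α} {x : α}
    (h : pre ++ x :: post = l ++ [u]) :
    (post = [] ∧ x = u ∧ pre = l) ∨
      (∃ post₀, post = post₀ ++ [u] ∧ l = pre ++ x :: post₀) := by
  rcases post.eq_nil_or_concat with rfl | ⟨post₀, z, rfl⟩
  · obtain ⟨h1, h2⟩ := lastEq (by simpa using h)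
    exact Or.inl ⟨rfl, h2, h1⟩
  · have h' : (pre ++ x :: post₀) ++ [z] = l ++ [u] := by simpa using h
    obtain ⟨h1, h2⟩ := lastEq h'
    exact Or.inr ⟨post₀, by rw [h2]; simp [List.concat_eq_append], h1.symm⟩

lemma mem_split {α : Type*} {l₁ l₂ p q : List α} {x y : α}
    (h : l₁ ++ x :: l₂ = p ++ y :: q) :
    (l₁ = p ∧ x = y ∧ l₂ = q) ∨ x ∈ p ∨ x ∈ q := by
  induction l₁ generalizing p with
  | nil =>
    cases p with
    | nil => simp at h; exact Or.inl ⟨rfl, h.1, h.2⟩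
    | cons b p' => simp at h; exact Or.inr (Or.inl (by simp [h.1]))
  | cons a l₁' ih =>
    cases p with
    | nil =>
      simp at h
      exact Or.inr (Or.inr (by rw [← h.2]; simp))
    | cons b p' =>
      simp at h
      rcases ih h.2 with ⟨h1, h2, h3⟩ | hm | hm
      · exact Or.inl ⟨by simp [h.1, h1], h2, h3⟩
      · exact Or.inr (Or.inl (by simp [hm]))
      · exact Or.inr (Or.inr hm)

lemma shiftEq {α : Type*} {p q s r : List α} {x y : α}
    (h : p ++ x :: s = q ++ y :: r) (hl : q.length = p.length + 1) :
    ∃ z, q = p ++ [z] ∧ x = z ∧ s = y :: r := by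
  induction p generalizing q with
  | nil =>
    cases q with
    | nil => simp at hl
    | cons b q' =>
      have hq' : q' = [] := by
        simpa using hl
      subst hq'
      simp at h
      exact ⟨b, rfl, h.1, h.2⟩
  | cons a p' ih =>
    cases q with
    | nil => simp at hl
    | cons b q' =>
      simp at h hl
      obtain ⟨z, h1, h2, h3⟩ := ih h.2 hl
      exact ⟨z, by simp [h.1, h1], h2, h3⟩

lemma bt_injective : Function.Injective (bt (F := F) (V := V) (X := X)) := by
  intro a b h
  simpa [bt] using h

lemma map_bt_inj {l₁ l₂ : List (GTerm (ESym F V X))}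
    (h : l₁.map bt = l₂.map bt) : l₁ = l₂ :=
  List.map_injective_iff.mpr bt_injective h

lemma midEq {α : Type*} {p₁ p₂ s₁ s₂ : List α} {x y : α}
    (h : p₁ ++ x :: s₁ = p₂ ++ y :: s₂) (hl : p₁.length = p₂.length) :
    p₁ = p₂ ∧ x = y ∧ s₁ = s₂ := by
  obtain ⟨h1, h2⟩ := List.append_inj h hl
  injection h2 with h3 h4
  exact ⟨h1, h3, h4⟩

/-- "Quasi-base" terms: built only from `base` symbols (no arity check). -/
inductive QB : GTerm (ESym F V X) → Prop
  | node {f : F} {ts : List (GTerm (ESym F V X))} :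
      (∀ t ∈ ts, QB t) → QB (.node (.base f) ts)

lemma isBase_qb {ar : F → ℕ} {t : GTerm (ESym F V X)}
    (h : IsBase ar t) : QB t := by
  induction h with
  | node hlen hts ih => exact QB.node ih

/-- Atomic ground rule instances: a superset of all rules of the
translation, forgetting which strategy generated them. -/
inductive ARule (ar : F → ℕ) :
    GTerm (ESym F V X) → GTerm (ESym F V X) → Prop
  | retId {s : Strat F V X} {t} : IsBase ar t → ARule ar (ph s t) t
  | mkBot {s : Strat F V X} {t} : ARule ar (ph s (bt t)) (bt t)
  | mkFail {s : Strat F V X} {t} : IsBase ar t → ARule ar (ph s t) (bt t)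
  | ruleOk {l r : Tm F V} (wf : ∀ v, VarIn v r → VarIn v l)
      (σ : V → GTerm (ESym F V X)) :
      ARule ar (ph (.rule l r wf) (substE σ l)) (substE σ r)
  | seqStart {s s₁ s₂ : Strat F V X} {t} : IsBase ar t →
      ARule ar (ph s t) (.node (.phiSeq s₁ s₂) [ph s₂ (ph s₁ t), t])
  | seqOk {s₁ s₂ : Strat F V X} {t u} : IsBase ar t →
      ARule ar (.node (.phiSeq s₁ s₂) [t, u]) t
  | seqFail {s₁ s₂ : Strat F V X} {t u} :
      ARule ar (.node (.phiSeq s₁ s₂) [bt t, u]) (bt u)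
  | chStart {s s₁ s₂ : Strat F V X} {t} : IsBase ar t →
      ARule ar (ph s t) (.node (.phiCh s₁ s₂) [ph s₁ t])
  | chFail {s₁ s₂ : Strat F V X} {t} :
      ARule ar (.node (.phiCh s₁ s₂) [bt t]) (ph s₂ t)
  | chOk {s₁ s₂ : Strat F V X} {t} : IsBase ar t →
      ARule ar (.node (.phiCh s₁ s₂) [t]) t
  | mkUnfold {s s' : Strat F V X} {t} : IsBase ar t →
      ARule ar (ph s t) (ph s' t)
  | allStart {s s' : Strat F V X} {f : F} {ts} :
      ARule ar (ph s' (.node (.base f) ts))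
        (.node (.psiAll s f) (ts.map (ph s) ++ [.node (.base f) ts]))
  | allOk {s : Strat F V X} {f : F} {ts u} : (∀ t ∈ ts, IsBase ar t) →
      ARule ar (.node (.psiAll s f) (ts ++ [u])) (.node (.base f) ts)
  | allFail {s : Strat F V X} {f : F} {ts u} :
      ARule ar (.node (.psiAll s f) (ts ++ [u])) (bt u)
  | oneStart {s s' : Strat F V X} {f : F} {t ts} :
      ARule ar (ph s' (.node (.base f) (t :: ts)))
        (.node (.psiOne s f 0) (ph s t :: ts))
  | oneOk {s : Strat F V X} {f : F} {i : ℕ}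
      {pre post : List (GTerm (ESym F V X))} {t} :
      IsBase ar t → pre.length = i →
      ARule ar (.node (.psiOne s f i) (pre.map bt ++ t :: post))
        (.node (.base f) (pre ++ t :: post))
  | oneNext {s : Strat F V X} {f : F} {i : ℕ}
      {pre post : List (GTerm (ESym F V X))} {t} :
      pre.length = i + 1 →
      ARule ar (.node (.psiOne s f i) (pre.map bt ++ t :: post))
        (.node (.psiOne s f (i + 1)) (pre.map bt ++ ph s t :: post))
  | oneLast {s : Strat F V X} {f : F} {pre : List (GTerm (ESym F V X))} :
      pre.length = ar f →
      ARule ar (.node (.psiOne s f (ar f - 1)) (pre.map bt))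
        (bt (.node (.base f) pre))

lemma srule_arule {ar : F → ℕ} {S : Strat F V X} {a b}
    (h : SRule ar S a b) : ARule ar a b := by
  induction h with
  | idOk ht => exact ARule.retId ht
  | idBot => exact ARule.mkBot
  | failOk ht => exact ARule.mkFail ht
  | failBot => exact ARule.mkBot
  | ruleOk σ => exact ARule.ruleOk _ σ
  | ruleFail ht _ => exact ARule.mkFail ht
  | ruleBot => exact ARule.mkBot
  | seqStart ht => exact ARule.seqStart ht
  | seqBot => exact ARule.mkBot
  | seqOk ht => exact ARule.seqOk ht
  | seqFail => exact ARule.seqFail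
  | seqL _ ih => exact ih
  | seqR _ ih => exact ih
  | chStart ht => exact ARule.chStart ht
  | chBot => exact ARule.mkBot
  | chFail => exact ARule.chFail
  | chOk ht => exact ARule.chOk ht
  | chL _ ih => exact ih
  | chR _ ih => exact ih
  | muStart ht => exact ARule.mkUnfold ht
  | muBot => exact ARule.mkBot
  | muVarStart ht => exact ARule.mkUnfold ht
  | muVarBot => exact ARule.mkBot
  | muSub _ ih => exact ih
  | allBot => exact ARule.mkBot
  | allConst hc =>
    exact ARule.retId (IsBase.node (by simpa using hc.symm) (by simp))
  | allStart _ _ => exact ARule.allStart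
  | allOk _ _ hb => exact ARule.allOk hb
  | allFail _ _ _ => exact ARule.allFail
  | allSub _ ih => exact ih
  | oneBot => exact ARule.mkBot
  | oneConst hc =>
    exact ARule.mkFail (IsBase.node (by simpa using hc.symm) (by simp))
  | oneStart _ => exact ARule.oneStart
  | oneOk ht hl _ => exact ARule.oneOk ht hl
  | oneNext hl _ => exact ARule.oneNext hl
  | oneLast _ hl => exact ARule.oneLast hl
  | oneSub _ ih => exact ih

lemma erule_arule {ar : F → ℕ} {Γ : Ctx F V X} {S : Strat F V X} {a b}
    (h : ERule ar Γ S a b) : ARule ar a b := by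
  rcases h with h | h
  · exact srule_arule h
  · cases h with
    | varStart _ ht => exact ARule.mkUnfold ht
    | varBot _ => exact ARule.mkBot
    | sub _ hs => exact srule_arule hs

lemma arule_not_base {ar : F → ℕ} {f : F} {l : List (GTerm (ESym F V X))} {d}
    (h : ARule ar (.node (.base f) l) d) : False := by
  cases h

lemma arule_not_bot {ar : F → ℕ} {l : List (GTerm (ESym F V X))} {d}
    (h : ARule ar (.node .bot l) d) : False := by
  cases h

theorem substE_qb {σ : V → GTerm (ESym F V X)} :
    ∀ (u : Tm F V), (∀ v, VarIn v u → QB (σ v)) → QB (substE σ u)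
  | .var v, h => by rw [substE]; exact h v .var
  | .node f ts, h => by
    rw [substE]
    refine QB.node ?_
    intro t ht
    obtain ⟨⟨t', ht'⟩, -, rfl⟩ := List.mem_map.mp ht
    exact substE_qb t' (fun v hv => h v (.node ht' hv))
termination_by u => sizeOf u
decreasing_by
  have := List.sizeOf_lt_of_mem ht'
  simp only [Tm.node.sizeOf_spec]
  omega

lemma subst_isBase_inv {ar : F → ℕ} {σ : V → GTerm (ESym F V X)}
    {l : Tm F V} {v : V} (hv : VarIn v l) (h : IsBase ar (substE σ l)) :
    IsBase ar (σ v) := by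
  induction hv with
  | var => rwa [substE] at h
  | @node f ts t ht hvt ih =>
    rw [substE] at h
    cases h with
    | node hlen hts =>
      exact ih (hts _ (List.mem_map.mpr ⟨⟨t, ht⟩, List.mem_attach _ _, rfl⟩))

/-- The invariant: `Pin ar o c` pins the failure origin of the state `c`
to `o`. -/
inductive Pin (ar : F → ℕ) :
    GTerm (ESym F V X) → GTerm (ESym F V X) → Prop
  | safe {o a} : QB a → Pin ar o a
  | bot {o} : IsBase ar o → Pin ar o (bt o)
  | phi {t} (s : Strat F V X) : IsBase ar t → Pin ar t (ph s t)
  | seq {o a} (s₁ s₂ : Strat F V X) : IsBase ar o →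
      Pin ar o (.node (.phiSeq s₁ s₂) [a, o])
  | ch {o a} (s₁ s₂ : Strat F V X) : Pin ar o a →
      Pin ar o (.node (.phiCh s₁ s₂) [a])
  | psiAll {o} {as : List (GTerm (ESym F V X))} (s : Strat F V X) (f : F) :
      IsBase ar o → Pin ar o (.node (.psiAll s f) (as ++ [o]))
  | psiOne {pre post : List (GTerm (ESym F V X))} {a t₀}
      (s : Strat F V X) (f : F) (i : ℕ) :
      (∀ x ∈ pre, IsBase ar x) → IsBase ar t₀ → Pin ar t₀ a →
      (∀ x ∈ post, IsBase ar x) → pre.length = i →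
      Pin ar (.node (.base f) (pre ++ t₀ :: post))
        (.node (.psiOne s f i) (pre.map bt ++ a :: post))

lemma pin_bt {ar : F → ℕ} {o : GTerm (ESym F V X)} {l}
    (h : Pin ar o (.node .bot l)) : l = [o] ∧ IsBase ar o := by
  cases h with
  | safe hq => cases hq
  | bot ho => exact ⟨rfl, ho⟩

variable {ar : F → ℕ} {Γ : Ctx F V X} {S : Strat F V X}

lemma qb_nf {u v : GTerm (ESym F V X)} (hq : QB u)
    (hr : Red (ERule ar Γ S) u v) : False := by
  induction hr with
  | root h =>
    cases hq with
    | node hts => exact arule_not_base (erule_arule h)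
  | sub hred ih =>
    cases hq with
    | node hts => exact ih (hts _ (by simp))

lemma isBase_nf {u v : GTerm (ESym F V X)} (hu : IsBase ar u)
    (hr : Red (ERule ar Γ S) u v) : False :=
  qb_nf (isBase_qb hu) hr

lemma red_bt {x v : GTerm (ESym F V X)} (hx : IsBase ar x)
    (hr : Red (ERule ar Γ S) (bt x) v) : False := by
  generalize hE : bt x = w at hr
  cases hr with
  | root h => exact arule_not_bot (hE ▸ erule_arule h)
  | sub hred =>
    rw [bt] at hE
    injection hE with h1 h2
    obtain ⟨-, rfl, -⟩ := split1 h2.symm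
    exact isBase_nf hx hred

lemma pres_root {c d o : GTerm (ESym F V X)}
    (h : ARule ar c d) (hc : Pin ar o c) : Pin ar o d := by
  cases hc with
  | safe hq =>
    cases hq with
    | node hts => exact absurd h arule_not_base
  | bot ho => exact absurd h arule_not_bot
  | phi s ht =>
    cases h with
    | retId ht' => exact Pin.safe (isBase_qb ht)
    | mkBot => cases ht
    | mkFail ht' => exact Pin.bot ht
    | ruleOk wf σ =>
      exact Pin.safe (substE_qb _ fun v hv =>
        isBase_qb (subst_isBase_inv (wf v hv) ht))
    | seqStart ht' => exact Pin.seq _ _ ht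
    | chStart ht' => exact Pin.ch _ _ (Pin.phi _ ht)
    | mkUnfold ht' => exact Pin.phi _ ht
    | allStart => exact Pin.psiAll _ _ ht
    | oneStart =>
      cases ht with
      | node hlen hts =>
        exact Pin.psiOne (pre := []) _ _ _ (by simp)
          (hts _ (by simp)) (Pin.phi _ (hts _ (by simp)))
          (fun x hx => hts x (by simp [hx])) rfl
  | seq s₁ s₂ ho =>
    cases h with
    | seqOk ht' => exact Pin.safe (isBase_qb ht')
    | seqFail => exact Pin.bot ho
  | ch s₁ s₂ hpa =>
    cases h with
    | chFail =>
      obtain ⟨h1, h2⟩ := pin_bt hpa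
      obtain rfl : _ = o := by injection h1
      exact Pin.phi _ h2
    | chOk ht' => exact Pin.safe (isBase_qb ht')
  | @psiAll o as s f ho =>
    generalize hL : as ++ [o] = L at h
    cases h with
    | allOk hb =>
      obtain ⟨rfl, rfl⟩ := lastEq hL
      exact Pin.safe (QB.node fun x hx => isBase_qb (hb x hx))
    | allFail =>
      obtain ⟨rfl, rfl⟩ := lastEq hL
      exact Pin.bot ho
  | @psiOne pre post a t₀ s f i hpre ht₀ hpa hpost hlen =>
    generalize hL : List.map bt pre ++ a :: post = L at h
    cases h with
    | @oneOk sr fr ir pre' post' u htu hlen' =>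
      obtain ⟨h1, rfl, rfl⟩ := by
        refine midEq hL ?_
        simp [hlen, hlen']
      obtain rfl : pre = pre' := map_bt_inj h1
      refine Pin.safe (QB.node fun x hx => isBase_qb (ar := ar) ?_)
      rcases List.mem_append.mp hx with hx | hx
      · exact hpre x hx
      · rcases List.mem_cons.mp hx with rfl | hx
        · exact htu
        · exact hpost x hx
    | @oneNext sr fr ir pre' post' u hlen' =>
      obtain ⟨z, hq, hza, rfl⟩ := shiftEq hL (by simp [hlen, hlen'])
      have hz : z ∈ List.map bt pre' := by rw [hq]; simp
      obtain ⟨w, hw, hwz⟩ := List.mem_map.mp hz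
      rw [← hwz] at hza
      obtain ⟨h1, -⟩ := pin_bt (hza ▸ hpa)
      have hwt : w = t₀ := by injection h1
      have hpre' : pre' = pre ++ [w] := by
        refine map_bt_inj ?_
        rw [hq, ← hwz]; simp
      have hu : IsBase ar u := hpost u (by simp)
      have kk : (pre' ++ u :: post' : List _) = pre ++ t₀ :: u :: post' := by
        simp [hpre', hwt]
      have goal := Pin.psiOne (ar := ar) (a := ph s u) (pre := pre')
        (post := post') s f (i + 1)
        (by intro x hx
            rw [hpre'] at hx
            rcases List.mem_append.mp hx with hx | hx
            · exact hpre x hx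
            · simp at hx; subst hx; rw [hwt]; exact ht₀)
        hu (Pin.phi _ hu)
        (fun x hx => hpost x (by simp [hx]))
        hlen'
      rwa [kk] at goal
    | @oneLast sr fr pre' hlen' =>
      have ha : a ∈ List.map bt pre' := by
        rw [← hL]; exact List.mem_append.mpr (Or.inr (by simp))
      obtain ⟨w, hw, hwa⟩ := List.mem_map.mp ha
      obtain ⟨h1, -⟩ := pin_bt (hwa ▸ hpa)
      have hwt : w = t₀ := by injection h1
      cases post with
      | cons z rest =>
        have hz : z ∈ List.map bt pre' := by
          rw [← hL]; exact List.mem_append.mpr (Or.inr (by simp))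
        obtain ⟨y, -, hy⟩ := List.mem_map.mp hz
        have := hpost z (by simp)
        rw [← hy] at this
        cases this
      | nil =>
        have hpre' : pre' = pre ++ [w] := by
          refine map_bt_inj ?_
          rw [← hL, ← hwa]; simp
        have e : (pre ++ t₀ :: ([] : List _) : List _) = pre' := by
          rw [hpre']; simp [hwt]
        rw [← e]
        refine Pin.bot (IsBase.node ?_ ?_)
        · rw [e]; exact hlen'
        · intro x hx
          rcases List.mem_append.mp hx with hx | hx
          · exact hpre x hx
          · simp at hx; subst hx; exact ht₀

lemma pres {c d : GTerm (ESym F V X)}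
    (hr : Red (ERule ar Γ S) c d) :
    ∀ {o : GTerm (ESym F V X)}, Pin ar o c → Pin ar o d := by
  induction hr with
  | root h => exact fun hc => pres_root (erule_arule h) hc
  | @sub g pre post t t' hred ih =>
    intro o hc
    generalize hL : pre ++ t :: post = L at hc
    cases hc with
    | safe hq =>
      cases hq with
      | node hts =>
        exact absurd hred (fun hr' => qb_nf (hts t (by rw [← hL]; simp)) hr')
    | bot ho =>
      obtain ⟨-, rfl, -⟩ := split1 hL
      exact absurd hred (fun hr' => isBase_nf ho hr')
    | phi s ht =>
      obtain ⟨-, rfl, -⟩ := split1 hL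
      exact absurd hred (fun hr' => isBase_nf ht hr')
    | @seq o' x s₁ s₂ ho =>
      rcases split2 hL with ⟨rfl, rfl, rfl⟩ | ⟨-, rfl, -⟩
      · exact Pin.seq s₁ s₂ ho
      · exact absurd hred (fun hr' => isBase_nf ho hr')
    | @ch o' x s₁ s₂ hpa =>
      obtain ⟨rfl, rfl, rfl⟩ := split1 hL
      exact Pin.ch s₁ s₂ (ih hpa)
    | @psiAll o' as s f ho =>
      rcases splitLast hL with ⟨rfl, rfl, rfl⟩ | ⟨post₀, rfl, rfl⟩
      · exact absurd hred (fun hr' => isBase_nf ho hr')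
      · have e : (pre ++ t' :: (post₀ ++ [o]) : List _)
            = (pre ++ t' :: post₀) ++ [o] := by simp
        rw [e]
        exact Pin.psiAll s f ho
    | @psiOne pre₀ post₀ x t₀ s f i hpre ht₀ hpx hpost hlen =>
      rcases mem_split hL with ⟨rfl, rfl, rfl⟩ | hm | hm
      · exact Pin.psiOne s f i hpre ht₀ (ih hpx) hpost hlen
      · obtain ⟨w, hw, hwt⟩ := List.mem_map.mp hm
        exact absurd hred (fun hr' => red_bt (hpre w hw) (hwt ▸ hr'))
      · exact absurd hred (fun hr' => isBase_nf (hpost t hm) hr')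

end FailureOrigin


/-- the origin of failure is preserved by the encoding: if
`φ_S(t)` rewrites to some `⊥(t')` with respect to `T[Γ](S) ∪ T[Γ](Γ)`,
then `t' = t`. -/
theorem encoding_failure_origin {F V X : Type} (ar : F → ℕ)
    (S : Strat F V X) (Γ : Ctx F V X)
    (hfv : ∀ x ∈ fvarS S, ∃ s, Γ x = some s)
    (t : GTerm (ESym F V X)) (ht : IsBase ar t)
    (t' : GTerm (ESym F V X))
    (h : Reds (ERule ar Γ S) (ph S t) (bt t')) : t' = t := by
  have key : ∀ {a b : GTerm (ESym F V X)}, Reds (ERule ar Γ S) a b →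
      Pin ar t a → Pin ar t b := by
    intro a b hab
    induction hab with
    | refl => exact id
    | tail _ hstep ih => exact fun hp => pres hstep (ih hp)
  have := pin_bt (key h (Pin.phi S ht))
  injection this.1
end

section
/- Subject reduction for the many-sorted strategy encoding: over a many-sorted signature (S, F) with sort-preserving rewrite rules, for any strategy Str and context Γ with free strategy variables of Str in the domain of Γ, one step of rewriting with the sorted translation T_S[Γ](Str) ∪ T_S[Γ](Γ) preserves sorts: if t is a well-sorted term of sort s over the extended signature and t rewrites in one step to t', then t' is well-sorted of sort s. -/
/-! ### Many-sorted signatures and the sorted translation -/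

/-- Arity of a symbol of a many-sorted signature with domain function `dom`. -/
def arOf {Srt F : Type} (dom : F → List Srt) : F → ℕ := fun f => (dom f).length

/-- Sorting judgment for terms with variables over a many-sorted signature
`(Srt, F)` with profiles `dom f → cod f` and sorted variables (`vs`). -/
inductive HasSortT {Srt F V : Type} (dom : F → List Srt) (cod : F → Srt)
    (vs : V → Srt) : Tm F V → Srt → Prop
  | var {v} : HasSortT dom cod vs (.var v) (vs v)
  | node {f : F} {ts : List (Tm F V)} : ts.length = (dom f).length →
      (∀ p ∈ ts.zip (dom f), HasSortT dom cod vs p.1 p.2) →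
      HasSortT dom cod vs (.node f ts) (cod f)

/-- Sorting judgment for ground terms over the extended signature of the
sorted translation.  A base symbol `f` has profile `dom f → cod f`; the
symbols `⊥`, `φ_S`, `φ_X` and `φ_choice` have (overloaded) profile `s → s`
for every sort `s`; `φ_seq` has profile `s × s → s` for every sort `s`;
`ψ_f` has profile `dom f × cod f → cod f` and `ψ_f^i` profile
`dom f → cod f`. -/
inductive HasSortE {Srt F V X : Type} (dom : F → List Srt) (cod : F → Srt) :
    GTerm (ESym F V X) → Srt → Prop
  | base {f : F} {ts : List (GTerm (ESym F V X))} :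
      ts.length = (dom f).length →
      (∀ p ∈ ts.zip (dom f), HasSortE dom cod p.1 p.2) →
      HasSortE dom cod (.node (.base f) ts) (cod f)
  | bot {t s} : HasSortE dom cod t s → HasSortE dom cod (bt t) s
  | phi {S : Strat F V X} {t s} : HasSortE dom cod t s →
      HasSortE dom cod (ph S t) s
  | phiSeq {s₁ s₂ : Strat F V X} {a b s} : HasSortE dom cod a s →
      HasSortE dom cod b s →
      HasSortE dom cod (.node (.phiSeq s₁ s₂) [a, b]) s
  | phiCh {s₁ s₂ : Strat F V X} {a s} : HasSortE dom cod a s →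
      HasSortE dom cod (.node (.phiCh s₁ s₂) [a]) s
  | psiAll {S : Strat F V X} {f : F} {ts : List (GTerm (ESym F V X))} {u} :
      ts.length = (dom f).length →
      (∀ p ∈ ts.zip (dom f), HasSortE dom cod p.1 p.2) →
      HasSortE dom cod u (cod f) →
      HasSortE dom cod (.node (.psiAll S f) (ts ++ [u])) (cod f)
  | psiOne {S : Strat F V X} {f : F} {i : ℕ}
      {ts : List (GTerm (ESym F V X))} :
      ts.length = (dom f).length →
      (∀ p ∈ ts.zip (dom f), HasSortE dom cod p.1 p.2) →
      HasSortE dom cod (.node (.psiOne S f i) ts) (cod f)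

/-- Well-sorted strategies: all the rewrite rules they contain are
sort-preserving (left- and right-hand sides well-sorted of the same sort). -/
inductive WSStrat {Srt F V X : Type} (dom : F → List Srt) (cod : F → Srt)
    (vs : V → Srt) : Strat F V X → Prop
  | id : WSStrat dom cod vs .id
  | fail : WSStrat dom cod vs .fail
  | rule {l r wf s} : HasSortT dom cod vs l s → HasSortT dom cod vs r s →
      WSStrat dom cod vs (.rule l r wf)
  | seq {s₁ s₂} : WSStrat dom cod vs s₁ → WSStrat dom cod vs s₂ →
      WSStrat dom cod vs (.seq s₁ s₂)
  | choice {s₁ s₂} : WSStrat dom cod vs s₁ → WSStrat dom cod vs s₂ →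
      WSStrat dom cod vs (.choice s₁ s₂)
  | one {s} : WSStrat dom cod vs s → WSStrat dom cod vs (.one s)
  | all {s} : WSStrat dom cod vs s → WSStrat dom cod vs (.all s)
  | mu {x s} : WSStrat dom cod vs s → WSStrat dom cod vs (.mu x s)
  | var {x} : WSStrat dom cod vs (.var x)

/-- Ground instances of the rules of the *sorted* translation `T_S[Γ](S)`:
the rule schemas are the same as in the unsorted case but the sorted
anti-patterns `!_s ⊥_s(_)` and `!_s l` range over well-sorted ground terms of
the original signature of sort `s`, and variables are instantiated by sorted
substitutions. -/
inductive SRuleS {Srt F V X : Type} (dom : F → List Srt) (cod : F → Srt)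
    (vs : V → Srt) :
    Strat F V X → GTerm (ESym F V X) → GTerm (ESym F V X) → Prop
  -- (SE1) id
  | idOk {t s} : IsBase (arOf dom) t → HasSortE dom cod t s →
      SRuleS dom cod vs .id (ph .id t) t
  | idBot {t s} : HasSortE dom cod t s →
      SRuleS dom cod vs .id (ph .id (bt t)) (bt t)
  -- (SE2) fail
  | failOk {t s} : IsBase (arOf dom) t → HasSortE dom cod t s →
      SRuleS dom cod vs .fail (ph .fail t) (bt t)
  | failBot {t s} : HasSortE dom cod t s →
      SRuleS dom cod vs .fail (ph .fail (bt t)) (bt t)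
  -- (SE3) rewrite rule
  | ruleOk {l r wf} (σ : V → GTerm (ESym F V X)) :
      (∀ v, HasSortE dom cod (σ v) (vs v)) →
      SRuleS dom cod vs (.rule l r wf)
        (ph (.rule l r wf) (substE σ l)) (substE σ r)
  | ruleFail {l r wf t s} : IsBase (arOf dom) t → HasSortE dom cod t s →
      (∀ σ : V → GTerm (ESym F V X),
        (∀ v, HasSortE dom cod (σ v) (vs v)) → substE σ l ≠ t) →
      SRuleS dom cod vs (.rule l r wf) (ph (.rule l r wf) t) (bt t)
  | ruleBot {l r wf t s} : HasSortE dom cod t s →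
      SRuleS dom cod vs (.rule l r wf) (ph (.rule l r wf) (bt t)) (bt t)
  -- (SE4) sequence
  | seqStart {s₁ s₂ t s} : IsBase (arOf dom) t → HasSortE dom cod t s →
      SRuleS dom cod vs (.seq s₁ s₂) (ph (.seq s₁ s₂) t)
        (.node (.phiSeq s₁ s₂) [ph s₂ (ph s₁ t), t])
  | seqBot {s₁ s₂ t s} : HasSortE dom cod t s →
      SRuleS dom cod vs (.seq s₁ s₂) (ph (.seq s₁ s₂) (bt t)) (bt t)
  | seqOk {s₁ s₂ t u s} : IsBase (arOf dom) t → HasSortE dom cod t s →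
      HasSortE dom cod u s →
      SRuleS dom cod vs (.seq s₁ s₂) (.node (.phiSeq s₁ s₂) [t, u]) t
  | seqFail {s₁ s₂ t u s} : HasSortE dom cod t s → HasSortE dom cod u s →
      SRuleS dom cod vs (.seq s₁ s₂) (.node (.phiSeq s₁ s₂) [bt t, u]) (bt u)
  | seqL {s₁ s₂ a b} : SRuleS dom cod vs s₁ a b →
      SRuleS dom cod vs (.seq s₁ s₂) a b
  | seqR {s₁ s₂ a b} : SRuleS dom cod vs s₂ a b →
      SRuleS dom cod vs (.seq s₁ s₂) a b
  -- (SE5) choice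
  | chStart {s₁ s₂ t s} : IsBase (arOf dom) t → HasSortE dom cod t s →
      SRuleS dom cod vs (.choice s₁ s₂) (ph (.choice s₁ s₂) t)
        (.node (.phiCh s₁ s₂) [ph s₁ t])
  | chBot {s₁ s₂ t s} : HasSortE dom cod t s →
      SRuleS dom cod vs (.choice s₁ s₂) (ph (.choice s₁ s₂) (bt t)) (bt t)
  | chFail {s₁ s₂ t s} : HasSortE dom cod t s →
      SRuleS dom cod vs (.choice s₁ s₂) (.node (.phiCh s₁ s₂) [bt t])
        (ph s₂ t)
  | chOk {s₁ s₂ t s} : IsBase (arOf dom) t → HasSortE dom cod t s →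
      SRuleS dom cod vs (.choice s₁ s₂) (.node (.phiCh s₁ s₂) [t]) t
  | chL {s₁ s₂ a b} : SRuleS dom cod vs s₁ a b →
      SRuleS dom cod vs (.choice s₁ s₂) a b
  | chR {s₁ s₂ a b} : SRuleS dom cod vs s₂ a b →
      SRuleS dom cod vs (.choice s₁ s₂) a b
  -- (SE6) recursion
  | muStart {x s t srt} : IsBase (arOf dom) t → HasSortE dom cod t srt →
      SRuleS dom cod vs (.mu x s) (ph (.mu x s) t) (ph s t)
  | muBot {x s t srt} : HasSortE dom cod t srt →
      SRuleS dom cod vs (.mu x s) (ph (.mu x s) (bt t)) (bt t)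
  | muVarStart {x s t srt} : IsBase (arOf dom) t → HasSortE dom cod t srt →
      SRuleS dom cod vs (.mu x s) (ph (.var x) t) (ph s t)
  | muVarBot {x s t srt} : HasSortE dom cod t srt →
      SRuleS dom cod vs (.mu x s) (ph (.var x) (bt t)) (bt t)
  | muSub {x s a b} : SRuleS dom cod vs s a b →
      SRuleS dom cod vs (.mu x s) a b
  -- (SE8) all
  | allBot {s t srt} : HasSortE dom cod t srt →
      SRuleS dom cod vs (.all s) (ph (.all s) (bt t)) (bt t)
  | allConst {s} {c : F} : dom c = [] →
      SRuleS dom cod vs (.all s) (ph (.all s) (.node (.base c) []))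
        (.node (.base c) [])
  | allStart {s} {f : F} {ts : List (GTerm (ESym F V X))} :
      0 < (dom f).length → ts.length = (dom f).length →
      (∀ p ∈ ts.zip (dom f), HasSortE dom cod p.1 p.2) →
      SRuleS dom cod vs (.all s) (ph (.all s) (.node (.base f) ts))
        (.node (.psiAll s f) (ts.map (ph s) ++ [.node (.base f) ts]))
  | allOk {s} {f : F} {ts : List (GTerm (ESym F V X))} {u} :
      0 < (dom f).length → ts.length = (dom f).length →
      (∀ p ∈ ts.zip (dom f), HasSortE dom cod p.1 p.2) →
      (∀ t ∈ ts, IsBase (arOf dom) t) → HasSortE dom cod u (cod f) →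
      SRuleS dom cod vs (.all s) (.node (.psiAll s f) (ts ++ [u]))
        (.node (.base f) ts)
  | allFail {s} {f : F} {ts : List (GTerm (ESym F V X))} {u t} :
      0 < (dom f).length → ts.length = (dom f).length →
      (∀ p ∈ ts.zip (dom f), HasSortE dom cod p.1 p.2) →
      HasSortE dom cod u (cod f) → bt t ∈ ts →
      SRuleS dom cod vs (.all s) (.node (.psiAll s f) (ts ++ [u])) (bt u)
  | allSub {s a b} : SRuleS dom cod vs s a b →
      SRuleS dom cod vs (.all s) a b
  -- (SE9) one
  | oneBot {s t srt} : HasSortE dom cod t srt →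
      SRuleS dom cod vs (.one s) (ph (.one s) (bt t)) (bt t)
  | oneConst {s} {c : F} : dom c = [] →
      SRuleS dom cod vs (.one s) (ph (.one s) (.node (.base c) []))
        (bt (.node (.base c) []))
  | oneStart {s} {f : F} {t : GTerm (ESym F V X)}
      {ts : List (GTerm (ESym F V X))} :
      ts.length + 1 = (dom f).length →
      (∀ p ∈ (t :: ts).zip (dom f), HasSortE dom cod p.1 p.2) →
      SRuleS dom cod vs (.one s) (ph (.one s) (.node (.base f) (t :: ts)))
        (.node (.psiOne s f 0) (ph s t :: ts))
  | oneOk {s} {f : F} {i : ℕ} {pre post : List (GTerm (ESym F V X))} {t} :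
      IsBase (arOf dom) t → pre.length = i →
      pre.length + 1 + post.length = (dom f).length →
      (∀ p ∈ (pre ++ t :: post).zip (dom f), HasSortE dom cod p.1 p.2) →
      SRuleS dom cod vs (.one s)
        (.node (.psiOne s f i) (pre.map bt ++ t :: post))
        (.node (.base f) (pre ++ t :: post))
  | oneNext {s} {f : F} {i : ℕ} {pre post : List (GTerm (ESym F V X))} {t} :
      pre.length = i + 1 →
      pre.length + 1 + post.length = (dom f).length →
      (∀ p ∈ (pre ++ t :: post).zip (dom f), HasSortE dom cod p.1 p.2) →
      SRuleS dom cod vs (.one s)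
        (.node (.psiOne s f i) (pre.map bt ++ t :: post))
        (.node (.psiOne s f (i + 1)) (pre.map bt ++ ph s t :: post))
  | oneLast {s} {f : F} {pre : List (GTerm (ESym F V X))} :
      0 < (dom f).length → pre.length = (dom f).length →
      (∀ p ∈ pre.zip (dom f), HasSortE dom cod p.1 p.2) →
      SRuleS dom cod vs (.one s)
        (.node (.psiOne s f ((dom f).length - 1)) (pre.map bt))
        (bt (.node (.base f) pre))
  | oneSub {s a b} : SRuleS dom cod vs s a b →
      SRuleS dom cod vs (.one s) a b

/-- Ground instances of the rules of the sorted translation `T_S[Γ](Γ)` of a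
context. -/
inductive CRuleS {Srt F V X : Type} (dom : F → List Srt) (cod : F → Srt)
    (vs : V → Srt) (Γ : Ctx F V X) :
    GTerm (ESym F V X) → GTerm (ESym F V X) → Prop
  | varStart {x s t srt} : Γ x = some s → IsBase (arOf dom) t →
      HasSortE dom cod t srt → CRuleS dom cod vs Γ (ph (.var x) t) (ph s t)
  | varBot {x s t srt} : Γ x = some s → HasSortE dom cod t srt →
      CRuleS dom cod vs Γ (ph (.var x) (bt t)) (bt t)
  | sub {x s a b} : Γ x = some s → SRuleS dom cod vs s a b →
      CRuleS dom cod vs Γ a b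

/-- The (ground instances of the) rules of `T_S[Γ](S) ∪ T_S[Γ](Γ)`. -/
def ERuleS {Srt F V X : Type} (dom : F → List Srt) (cod : F → Srt)
    (vs : V → Srt) (Γ : Ctx F V X) (S : Strat F V X)
    (a b : GTerm (ESym F V X)) : Prop :=
  SRuleS dom cod vs S a b ∨ CRuleS dom cod vs Γ a b


/-! Every rule of the sorted translation rewrites a term of sort `s` to a term of sort `s`:
the auxiliary symbols `⊥`, `φ`, `φ_seq`, `φ_choice` are sort-polymorphic, `ψ_f` and `ψ_f^i`
have the sort of `f`, and for an instance `φ_{l → r}(lσ) → rσ` of a sort-preserving rule the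
uniqueness of sorts forces `lσ` to have the common sort of `l` and `r`. Sort preservation is
moreover a congruence, since the sort of a term only depends on the sorts of its arguments. -/

theorem List.Forall₂.exists_eq_append_singleton {α β : Type*} {R : α → β → Prop}
    {l : List α} {a : α} {l' : List β} (h : List.Forall₂ R (l ++ [a]) l') :
    ∃ m b, l' = m ++ [b] ∧ List.Forall₂ R l m ∧ R a b := by
  induction l generalizing l' with
  | nil =>
    obtain ⟨b, m, hab, hm, rfl⟩ := List.forall₂_cons_left_iff.1 h
    rw [List.forall₂_nil_left_iff.1 hm]
    exact ⟨[], b, rfl, .nil, hab⟩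
  | cons x l ih =>
    obtain ⟨y, m, hxy, hm, rfl⟩ := List.forall₂_cons_left_iff.1 h
    obtain ⟨m', b, rfl, hm', hab⟩ := ih hm
    exact ⟨y :: m', b, rfl, .cons hxy hm', hab⟩

theorem forall_mem_zip_of_forall₂ {α β : Type*} {P : α → β → Prop} {l l' : List α}
    (h : List.Forall₂ (fun a a' => ∀ b, P a b → P a' b) l l') {ds : List β}
    (hl : ∀ p ∈ l.zip ds, P p.1 p.2) : ∀ p ∈ l'.zip ds, P p.1 p.2 := by
  induction h generalizing ds with
  | nil => simp
  | cons hab _ ih =>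
    cases ds with
    | nil => simp
    | cons d ds =>
      simp only [List.zip_cons_cons, List.forall_mem_cons] at hl ⊢
      exact ⟨hab _ hl.1, ih hl.2⟩

section SubjectReduction

variable {Srt F V X : Type} {dom : F → List Srt} {cod : F → Srt} {vs : V → Srt}

@[simp]
theorem substE_var (σ : V → GTerm (ESym F V X)) (v : V) : substE σ (.var v) = σ v := by
  rw [substE]

@[simp]
theorem substE_node (σ : V → GTerm (ESym F V X)) (f : F) (ts : List (Tm F V)) :
    substE σ (.node f ts) = .node (.base f) (ts.map (substE σ)) := by
  rw [substE]
  simp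

theorem HasSortE.of_ph {S : Strat F V X} {t : GTerm (ESym F V X)} {s : Srt}
    (h : HasSortE dom cod (ph S t) s) : HasSortE dom cod t s := by
  cases h; assumption

theorem HasSortE.of_bt {t : GTerm (ESym F V X)} {s : Srt}
    (h : HasSortE dom cod (bt t) s) : HasSortE dom cod t s := by
  cases h; assumption

theorem HasSortE.base_inv {f : F} {ts : List (GTerm (ESym F V X))} {s : Srt}
    (h : HasSortE dom cod (.node (.base f) ts) s) :
    s = cod f ∧ ts.length = (dom f).length ∧
      ∀ p ∈ ts.zip (dom f), HasSortE dom cod p.1 p.2 := by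
  cases h; exact ⟨rfl, ‹_›, ‹_›⟩

theorem HasSortE.eq_cod_of_psiAll {S : Strat F V X} {f : F}
    {ts : List (GTerm (ESym F V X))} {s : Srt}
    (h : HasSortE dom cod (.node (.psiAll S f) ts) s) : s = cod f := by
  cases h; rfl

theorem HasSortE.eq_cod_of_psiOne {S : Strat F V X} {f : F} {i : ℕ}
    {ts : List (GTerm (ESym F V X))} {s : Srt}
    (h : HasSortE dom cod (.node (.psiOne S f i) ts) s) : s = cod f := by
  cases h; rfl

theorem HasSortE.unique {t : GTerm (ESym F V X)} {s s' : Srt}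
    (h : HasSortE dom cod t s) (h' : HasSortE dom cod t s') : s = s' := by
  induction h generalizing s' with
  | base _ _ => exact h'.base_inv.1.symm
  | bot _ ih => exact ih h'.of_bt
  | phi _ ih => exact ih h'.of_ph
  | phiSeq _ _ ih _ => cases h'; exact ih ‹_›
  | phiCh _ ih => cases h'; exact ih ‹_›
  | psiAll _ _ _ _ _ => exact h'.eq_cod_of_psiAll.symm
  | psiOne _ _ => exact h'.eq_cod_of_psiOne.symm

theorem HasSortT.hasSortE_substE {σ : V → GTerm (ESym F V X)}
    (hσ : ∀ v, HasSortE dom cod (σ v) (vs v)) {l : Tm F V} {s : Srt}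
    (h : HasSortT dom cod vs l s) : HasSortE dom cod (substE σ l) s := by
  induction h with
  | var => simpa using hσ _
  | @node f ts hlen _ ih =>
    refine substE_node σ f ts ▸ .base (by simp [hlen]) fun p hp => ?_
    rw [List.zip_map_left] at hp
    obtain ⟨q, hq, rfl⟩ := List.mem_map.1 hp
    exact ih q hq

variable (dom cod) in
def PreservesSort (a b : GTerm (ESym F V X)) : Prop :=
  ∀ s, HasSortE dom cod a s → HasSortE dom cod b s

namespace PreservesSort

theorem refl (a : GTerm (ESym F V X)) : PreservesSort dom cod a a :=
  fun _ => id

theorem ph (S : Strat F V X) (a : GTerm (ESym F V X)) :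
    PreservesSort dom cod a (_root_.ph S a) :=
  fun _ => .phi

theorem bt (a : GTerm (ESym F V X)) : PreservesSort dom cod a (_root_.bt a) :=
  fun _ => .bot

theorem forall₂_refl (l : List (GTerm (ESym F V X))) :
    List.Forall₂ (PreservesSort dom cod) l l :=
  List.forall₂_same.2 fun a _ => refl a

theorem forall₂_map {g : GTerm (ESym F V X) → GTerm (ESym F V X)}
    (hg : ∀ a, PreservesSort dom cod a (g a)) (l : List (GTerm (ESym F V X))) :
    List.Forall₂ (PreservesSort dom cod) l (l.map g) :=
  List.forall₂_map_right_iff.2 (List.forall₂_same.2 fun a _ => hg a)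

theorem node {g : ESym F V X} {L L' : List (GTerm (ESym F V X))}
    (h : List.Forall₂ (PreservesSort dom cod) L L') :
    PreservesSort dom cod (.node g L) (.node g L') := by
  intro s hs
  cases hs with
  | base hlen hz => exact .base (h.length_eq ▸ hlen) (forall_mem_zip_of_forall₂ h hz)
  | bot ht =>
    obtain _ | ⟨hu, ⟨⟩⟩ := h
    exact .bot (hu _ ht)
  | phi ht =>
    obtain _ | ⟨hu, ⟨⟩⟩ := h
    exact .phi (hu _ ht)
  | phiSeq ha hb =>
    obtain _ | ⟨hu, _ | ⟨hv, ⟨⟩⟩⟩ := h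
    exact .phiSeq (hu _ ha) (hv _ hb)
  | phiCh ha =>
    obtain _ | ⟨hu, ⟨⟩⟩ := h
    exact .phiCh (hu _ ha)
  | psiAll hlen hz hu =>
    obtain ⟨ts', u', rfl, hts, hu'⟩ := h.exists_eq_append_singleton
    exact .psiAll (hts.length_eq ▸ hlen) (forall_mem_zip_of_forall₂ hts hz) (hu' _ hu)
  | psiOne hlen hz => exact .psiOne (h.length_eq ▸ hlen) (forall_mem_zip_of_forall₂ h hz)

end PreservesSort

theorem HasSortT.preservesSort_substE {l r : Tm F V} {s : Srt}
    (hl : HasSortT dom cod vs l s) (hr : HasSortT dom cod vs r s)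
    {σ : V → GTerm (ESym F V X)} (hσ : ∀ v, HasSortE dom cod (σ v) (vs v)) :
    PreservesSort dom cod (substE σ l) (substE σ r) := by
  intro s' h
  obtain rfl := (hl.hasSortE_substE hσ).unique h
  exact hr.hasSortE_substE hσ

theorem SRuleS.preservesSort {S : Strat F V X} {a b : GTerm (ESym F V X)}
    (h : SRuleS dom cod vs S a b) (hS : WSStrat dom cod vs S) :
    PreservesSort dom cod a b := by
  induction h with
  | idOk | idBot | failBot | ruleBot | seqBot | chBot | muBot | muVarBot | allBot | allConst
    | oneBot => exact fun _ ha => ha.of_ph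
  | failOk | ruleFail | oneConst => exact fun _ ha => .bot ha.of_ph
  | muStart | muVarStart => exact fun _ ha => .phi ha.of_ph
  | ruleOk σ hσ =>
    cases hS with | rule hl hr => exact fun _ ha => hl.preservesSort_substE hr hσ _ ha.of_ph
  | seqStart => exact fun _ ha => .phiSeq (.phi (.phi ha.of_ph)) ha.of_ph
  | seqOk => intro _ ha; cases ha; assumption
  | seqFail => intro _ ha; cases ha with | phiSeq _ hu => exact .bot hu
  | chStart => exact fun _ ha => .phiCh (.phi ha.of_ph)
  | chFail => intro _ ha; cases ha with | phiCh ht => exact .phi ht.of_bt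
  | chOk => intro _ ha; cases ha; assumption
  | allStart _ hlen =>
    intro _ ha
    obtain ⟨rfl, -, hz⟩ := ha.of_ph.base_inv
    exact .psiAll (by simpa using hlen)
      (forall_mem_zip_of_forall₂ (PreservesSort.forall₂_map (PreservesSort.ph _) _) hz)
      ha.of_ph
  | allOk _ hlen hz => intro _ ha; obtain rfl := ha.eq_cod_of_psiAll; exact .base hlen hz
  | allFail _ _ _ hu => intro _ ha; obtain rfl := ha.eq_cod_of_psiAll; exact .bot hu
  | oneStart hlen hz =>
    intro _ ha
    obtain rfl := ha.of_ph.base_inv.1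
    exact .psiOne (by simpa using hlen) (forall_mem_zip_of_forall₂
      (.cons (PreservesSort.ph _ _) (PreservesSort.forall₂_refl _)) hz)
  | oneOk _ _ hlen hz =>
    intro _ ha
    obtain rfl := ha.eq_cod_of_psiOne
    exact .base (by simp; omega) hz
  | oneNext _ hlen hz =>
    intro _ ha
    obtain rfl := ha.eq_cod_of_psiOne
    exact .psiOne (by simp; omega) (forall_mem_zip_of_forall₂ (List.rel_append
      (PreservesSort.forall₂_map PreservesSort.bt _)
      (.cons (PreservesSort.ph _ _) (PreservesSort.forall₂_refl _))) hz)
  | oneLast _ hlen hz =>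
    intro _ ha
    obtain rfl := ha.eq_cod_of_psiOne
    exact .bot (.base hlen hz)
  | seqL _ ih => cases hS with | seq h₁ _ => exact ih h₁
  | seqR _ ih => cases hS with | seq _ h₂ => exact ih h₂
  | chL _ ih => cases hS with | choice h₁ _ => exact ih h₁
  | chR _ ih => cases hS with | choice _ h₂ => exact ih h₂
  | muSub _ ih => cases hS with | mu h => exact ih h
  | allSub _ ih => cases hS with | all h => exact ih h
  | oneSub _ ih => cases hS with | one h => exact ih h

theorem CRuleS.preservesSort {Γ : Ctx F V X}
    (hΓ : ∀ x s', Γ x = some s' → WSStrat dom cod vs s') {a b : GTerm (ESym F V X)}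
    (h : CRuleS dom cod vs Γ a b) : PreservesSort dom cod a b := by
  cases h with
  | varStart => exact fun _ ha => .phi ha.of_ph
  | varBot => exact fun _ ha => ha.of_ph
  | sub hx hr => exact hr.preservesSort (hΓ _ _ hx)

theorem Red.preservesSort {R : GTerm (ESym F V X) → GTerm (ESym F V X) → Prop}
    (hR : ∀ a b, R a b → PreservesSort dom cod a b) {t t' : GTerm (ESym F V X)}
    (h : Red R t t') : PreservesSort dom cod t t' := by
  induction h with
  | root hab => exact hR _ _ hab
  | sub _ ih =>
    exact .node (List.rel_append (PreservesSort.forall₂_refl _)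
      (.cons ih (PreservesSort.forall₂_refl _)))

end SubjectReduction

theorem sorted_encoding_subject_reduction_general {Srt F V X : Type}
    (dom : F → List Srt) (cod : F → Srt) (vs : V → Srt)
    (S : Strat F V X) (Γ : Ctx F V X)
    (hS : WSStrat dom cod vs S)
    (hΓ : ∀ x s', Γ x = some s' → WSStrat dom cod vs s')
    (t t' : GTerm (ESym F V X)) (s : Srt)
    (ht : HasSortE dom cod t s)
    (hred : Red (ERuleS dom cod vs Γ S) t t') :
    HasSortE dom cod t' s :=
  hred.preservesSort (fun _ _ hab => hab.elim (·.preservesSort hS) (·.preservesSort hΓ)) s ht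

/-- subject reduction for the many-sorted strategy encoding:
one step of rewriting with the sorted translation `T_S[Γ](S) ∪ T_S[Γ](Γ)`
preserves sorts. -/
theorem sorted_encoding_subject_reduction {Srt F V X : Type}
    (dom : F → List Srt) (cod : F → Srt) (vs : V → Srt)
    (S : Strat F V X) (Γ : Ctx F V X)
    (hS : WSStrat dom cod vs S)
    (hΓ : ∀ x s', Γ x = some s' → WSStrat dom cod vs s')
    (hfv : ∀ x ∈ fvarS S, ∃ s', Γ x = some s')
    (t t' : GTerm (ESym F V X)) (s : Srt)
    (ht : HasSortE dom cod t s)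
    (hred : Red (ERuleS dom cod vs Γ S) t t') :
    HasSortE dom cod t' s :=
  sorted_encoding_subject_reduction_general dom cod vs S Γ hS hΓ t t' s ht hred
end
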